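/- For all integers N ≥ 1 and m ≥ 0, 𝔼 |S_{N,m}|^4 = |E_{N,m}|^2 + 2 · ∑_{k=0}^{m} ∑_{a, b ∈ E_{N,k}, gcd(a,b) = 1, a < b} |E_{⌊N/b⌋, m−k}|^2. -/

import Mathlib

set_option linter.unusedSectionVars false
set_option maxHeartbeats 1000000


open MeasureTheory ProbabilityTheory

/-- The Steinhaus (uniform) probability measure on the unit circle in `ℂ`,
realized as the pushforward of the normalized Lebesgue measure on `(0, 2π]`
under `t ↦ exp(it)`. -/
noncomputable def steinhausMeasure : Measure ℂ :=
  Measure.map (fun t : ℝ => Complex.exp (t * Complex.I))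
    ((ENNReal.ofReal (2 * Real.pi))⁻¹ • volume.restrict (Set.Ioc 0 (2 * Real.pi)))

/-- `Enm N m` is the set of integers `1 ≤ n ≤ N` with `Ω(n) = m`, where `Ω(n)` is the
number of prime factors of `n` counted with multiplicity. -/
def Enm (N m : ℕ) : Finset ℕ :=
  (Finset.Icc 1 N).filter fun n => n.primeFactorsList.length = m



lemma mem_Enm {N m n : ℕ} :
    n ∈ Enm N m ↔ (1 ≤ n ∧ n ≤ N) ∧ n.primeFactorsList.length = m := by
  simp [Enm, Finset.mem_Icc, and_assoc]

lemma Omega_mul {a b : ℕ} (ha : a ≠ 0) (hb : b ≠ 0) :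
    (a * b).primeFactorsList.length
      = a.primeFactorsList.length + b.primeFactorsList.length := by
  simpa using (Nat.perm_primeFactorsList_mul ha hb).length_eq

-- convention : x = ((a,c),(b,d)) ; condition a*b = c*d is x.1.1*x.2.1 = x.1.2*x.2.2
-- a < c is x.1.1 < x.1.2

/-- The main bijection count: quadruples with a*b=c*d and a<c. -/
lemma card_lt_part (N m : ℕ) :
    ((((Enm N m ×ˢ Enm N m) ×ˢ (Enm N m ×ˢ Enm N m))).filter
      (fun x => x.1.1 * x.2.1 = x.1.2 * x.2.2 ∧ x.1.1 < x.1.2)).card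
    = ∑ k ∈ Finset.range (m + 1),
        ∑ ab ∈ (Enm N k ×ˢ Enm N k).filter
            (fun ab => Nat.gcd ab.1 ab.2 = 1 ∧ ab.1 < ab.2),
          ((Enm (N / ab.2) (m - k)).card) ^ 2 := by
  classical
  -- the indexed set
  have hrhs :
      ∑ k ∈ Finset.range (m + 1),
        ∑ ab ∈ (Enm N k ×ˢ Enm N k).filter
            (fun ab => Nat.gcd ab.1 ab.2 = 1 ∧ ab.1 < ab.2),
          ((Enm (N / ab.2) (m - k)).card) ^ 2
      = ((Finset.range (m + 1)).sigma fun k =>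
          (((Enm N k ×ˢ Enm N k).filter
            (fun ab => Nat.gcd ab.1 ab.2 = 1 ∧ ab.1 < ab.2)).sigma fun st =>
              (Enm (N / st.2) (m - k)) ×ˢ (Enm (N / st.2) (m - k)))).card := by
    rw [Finset.card_sigma]
    refine Finset.sum_congr rfl fun k _ => ?_
    rw [Finset.card_sigma]
    refine Finset.sum_congr rfl fun st _ => ?_
    rw [Finset.card_product, sq]
  rw [hrhs]
  refine (Finset.card_bij
    (fun (x : Σ _ : ℕ, Σ _ : ℕ × ℕ, ℕ × ℕ) _ =>
      ((x.2.2.1 * x.2.1.1, x.2.2.1 * x.2.1.2), (x.2.1.2 * x.2.2.2, x.2.1.1 * x.2.2.2)))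
    ?_ ?_ ?_).symm
  · -- maps into the filter set
    rintro ⟨k, ⟨s, t⟩, ⟨g, u⟩⟩ hx
    simp only [Finset.mem_sigma, Finset.mem_filter, Finset.mem_product, Finset.mem_range] at hx
    obtain ⟨hk, ⟨⟨hs, ht⟩, hcop, hst⟩, hg, hu⟩ := hx
    obtain ⟨⟨hs1, hsN⟩, hsΩ⟩ := mem_Enm.mp hs
    obtain ⟨⟨ht1, htN⟩, htΩ⟩ := mem_Enm.mp ht
    obtain ⟨⟨hg1, hgN⟩, hgΩ⟩ := mem_Enm.mp hg
    obtain ⟨⟨hu1, huN⟩, huΩ⟩ := mem_Enm.mp hu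
    have hk' : k ≤ m := Nat.lt_succ_iff.mp hk
    have htpos : 0 < t := ht1
    have hgt : g * t ≤ N := (Nat.le_div_iff_mul_le htpos).mp hgN
    have hut : u * t ≤ N := (Nat.le_div_iff_mul_le htpos).mp huN
    have hgs : g * s ≤ N := le_trans (Nat.mul_le_mul_left g hst.le) hgt
    have hsu : s * u ≤ N := by
      calc s * u ≤ t * u := Nat.mul_le_mul_right u hst.le
      _ = u * t := mul_comm _ _
      _ ≤ N := hut
    have hOgs : (g * s).primeFactorsList.length = m := by
      rw [Omega_mul (by omega) (by omega), hgΩ, hsΩ]; omega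
    have hOgt : (g * t).primeFactorsList.length = m := by
      rw [Omega_mul (by omega) (by omega), hgΩ, htΩ]; omega
    have hOtu : (t * u).primeFactorsList.length = m := by
      rw [Omega_mul (by omega) (by omega), htΩ, huΩ]; omega
    have hOsu : (s * u).primeFactorsList.length = m := by
      rw [Omega_mul (by omega) (by omega), hsΩ, huΩ]; omega
    simp only [Finset.mem_filter, Finset.mem_product]
    refine ⟨⟨⟨mem_Enm.mpr ⟨⟨Nat.mul_pos hg1 hs1, hgs⟩, hOgs⟩,
              mem_Enm.mpr ⟨⟨Nat.mul_pos hg1 ht1, hgt⟩, hOgt⟩⟩,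
            mem_Enm.mpr ⟨⟨Nat.mul_pos ht1 hu1, by simpa [mul_comm] using hut⟩, hOtu⟩,
            mem_Enm.mpr ⟨⟨Nat.mul_pos hs1 hu1, hsu⟩, hOsu⟩⟩, by ring, ?_⟩
    exact mul_lt_mul_of_pos_left hst hg1
  · -- injectivity
    rintro ⟨k, ⟨s, t⟩, ⟨g, u⟩⟩ hx ⟨k', ⟨s', t'⟩, ⟨g', u'⟩⟩ hx' heq
    simp only [Finset.mem_sigma, Finset.mem_filter, Finset.mem_product, Finset.mem_range] at hx hx'
    obtain ⟨hk, ⟨⟨hs, ht⟩, hcop, hst⟩, hg, hu⟩ := hx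
    obtain ⟨hk', ⟨⟨hs', ht'⟩, hcop', hst'⟩, hg', hu'⟩ := hx'
    obtain ⟨⟨hs1, hsN⟩, hsΩ⟩ := mem_Enm.mp hs
    obtain ⟨⟨hs1', hsN'⟩, hsΩ'⟩ := mem_Enm.mp hs'
    obtain ⟨⟨hg1, hgN⟩, hgΩ⟩ := mem_Enm.mp hg
    obtain ⟨⟨hg1', hgN'⟩, hgΩ'⟩ := mem_Enm.mp hg'
    obtain ⟨⟨ht1, htN⟩, htΩ⟩ := mem_Enm.mp ht
    simp only [Prod.mk.injEq] at heq
    obtain ⟨⟨e1, e2⟩, e3, e4⟩ := heq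
    have hgg : g = g' := by
      have h1 : Nat.gcd (g * s) (g * t) = g := by
        rw [Nat.gcd_mul_left, hcop, mul_one]
      have h2 : Nat.gcd (g' * s') (g' * t') = g' := by
        rw [Nat.gcd_mul_left, hcop', mul_one]
      rw [← h1, ← h2, e1, e2]
    subst hgg
    have hss : s = s' := Nat.eq_of_mul_eq_mul_left hg1 e1
    have htt : t = t' := Nat.eq_of_mul_eq_mul_left hg1 e2
    subst hss; subst htt
    have huu : u = u' := by
      have := Nat.eq_of_mul_eq_mul_left ht1 e3
      exact this
    subst huu
    have hkk : k = k' := by rw [← hsΩ, hsΩ']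
    subst hkk
    rfl
  · -- surjectivity
    rintro ⟨⟨a, c⟩, ⟨b, d⟩⟩ hx
    simp only [Finset.mem_filter, Finset.mem_product] at hx
    obtain ⟨⟨⟨ha, hc⟩, hb, hd⟩, habcd, hac⟩ := hx
    obtain ⟨⟨ha1, haN⟩, haΩ⟩ := mem_Enm.mp ha
    obtain ⟨⟨hb1, hbN⟩, hbΩ⟩ := mem_Enm.mp hb
    obtain ⟨⟨hc1, hcN⟩, hcΩ⟩ := mem_Enm.mp hc
    obtain ⟨⟨hd1, hdN⟩, hdΩ⟩ := mem_Enm.mp hd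
    set g := Nat.gcd a c with hgdef
    have hgpos : 0 < g := Nat.gcd_pos_of_pos_left c ha1
    set s := a / g with hsdef
    set t := c / g with htdef
    have hgs : g * s = a := Nat.mul_div_cancel' (Nat.gcd_dvd_left a c)
    have hgt : g * t = c := Nat.mul_div_cancel' (Nat.gcd_dvd_right a c)
    have hcop : Nat.Coprime s t := Nat.coprime_div_gcd_div_gcd hgpos
    have hspos : 0 < s := by
      rcases Nat.eq_zero_or_pos s with h | h
      · rw [h, mul_zero] at hgs; omega
      · exact h
    have htpos : 0 < t := by
      rcases Nat.eq_zero_or_pos t with h | h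
      · rw [h, mul_zero] at hgt; omega
      · exact h
    have hst : s < t := by
      have : g * s < g * t := by rw [hgs, hgt]; exact hac
      exact lt_of_mul_lt_mul_left this (Nat.zero_le g)
    have hsb : s * b = t * d := by
      have h : g * (s * b) = g * (t * d) := by
        rw [← mul_assoc, ← mul_assoc, hgs, hgt]; exact habcd
      exact Nat.eq_of_mul_eq_mul_left hgpos h
    have htb : t ∣ b := (Nat.Coprime.dvd_of_dvd_mul_left hcop.symm ⟨d, hsb⟩)
    set u := b / t with hudef
    have htu : t * u = b := Nat.mul_div_cancel' htb
    have hupos : 0 < u := by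
      rcases Nat.eq_zero_or_pos u with h | h
      · rw [h, mul_zero] at htu; omega
      · exact h
    have hdsu : s * u = d := by
      have h : t * (s * u) = t * d := by
        rw [← hsb, ← htu]; ring
      exact Nat.eq_of_mul_eq_mul_left htpos h
    set k := s.primeFactorsList.length with hkdef
    have hΩa : g.primeFactorsList.length + s.primeFactorsList.length = m := by
      rw [← haΩ, ← hgs, Omega_mul (by omega) (by omega)]
    have hΩc : g.primeFactorsList.length + t.primeFactorsList.length = m := by
      rw [← hcΩ, ← hgt, Omega_mul (by omega) (by omega)]
    have htΩ : t.primeFactorsList.length = k := by omega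
    have hgΩ : g.primeFactorsList.length = m - k := by omega
    have hΩb : t.primeFactorsList.length + u.primeFactorsList.length = m := by
      rw [← hbΩ, ← htu, Omega_mul (by omega) (by omega)]
    have huΩ : u.primeFactorsList.length = m - k := by omega
    refine ⟨⟨k, ⟨(s, t), (g, u)⟩⟩, ?_, ?_⟩
    · simp only [Finset.mem_sigma, Finset.mem_filter, Finset.mem_product, Finset.mem_range]
      have hsN' : s ≤ N := le_trans (Nat.le_of_dvd ha1 ⟨g, by rw [mul_comm]; exact hgs.symm⟩) haN
      have htN' : t ≤ N := le_trans (Nat.le_of_dvd hc1 ⟨g, by rw [mul_comm]; exact hgt.symm⟩) hcN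
      refine ⟨by omega, ⟨⟨mem_Enm.mpr ⟨⟨hspos, hsN'⟩, rfl⟩,
          mem_Enm.mpr ⟨⟨htpos, htN'⟩, htΩ⟩⟩, hcop, hst⟩,
        mem_Enm.mpr ⟨⟨hgpos, ?_⟩, hgΩ⟩, mem_Enm.mpr ⟨⟨hupos, ?_⟩, huΩ⟩⟩
      · exact (Nat.le_div_iff_mul_le htpos).mpr (by rw [mul_comm] at hgt ⊢; rw [hgt]; exact hcN)
      · exact (Nat.le_div_iff_mul_le htpos).mpr (by rw [mul_comm, htu]; exact hbN)
    · simp only [Prod.mk.injEq]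
      exact ⟨⟨hgs, hgt⟩, htu, hdsu⟩

lemma card_diag (N m : ℕ) :
    ((((Enm N m ×ˢ Enm N m) ×ˢ (Enm N m ×ˢ Enm N m))).filter
      (fun x => x.1.1 * x.2.1 = x.1.2 * x.2.2 ∧ x.1.1 = x.1.2)).card
    = (Enm N m).card ^ 2 := by
  classical
  rw [sq, ← Finset.card_product]
  refine (Finset.card_bij
    (fun (ab : ℕ × ℕ) _ => ((ab.1, ab.1), (ab.2, ab.2))) ?_ ?_ ?_).symm
  · rintro ⟨a, b⟩ hab
    simp only [Finset.mem_product] at hab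
    simp only [Finset.mem_filter, Finset.mem_product]
    refine ⟨⟨⟨hab.1, hab.1⟩, hab.2, hab.2⟩, ?_⟩
    simp
  · rintro ⟨a, b⟩ _ ⟨a', b'⟩ _ heq
    simp only [Prod.mk.injEq] at heq
    exact Prod.ext heq.1.1 heq.2.1
  · rintro ⟨⟨a, c⟩, ⟨b, d⟩⟩ hx
    simp only [Finset.mem_filter, Finset.mem_product] at hx
    obtain ⟨⟨⟨ha, hc⟩, hb, hd⟩, habcd, hac⟩ := hx
    subst hac
    have ha1 : 1 ≤ a := ((mem_Enm.mp ha).1).1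
    have hbd : b = d := Nat.eq_of_mul_eq_mul_left ha1 habcd
    subst hbd
    exact ⟨(a, b), Finset.mem_product.mpr ⟨ha, hb⟩, rfl⟩

lemma card_swap (N m : ℕ) :
    ((((Enm N m ×ˢ Enm N m) ×ˢ (Enm N m ×ˢ Enm N m))).filter
      (fun x => x.1.1 * x.2.1 = x.1.2 * x.2.2 ∧ x.1.2 < x.1.1)).card
    = ((((Enm N m ×ˢ Enm N m) ×ˢ (Enm N m ×ˢ Enm N m))).filter
      (fun x => x.1.1 * x.2.1 = x.1.2 * x.2.2 ∧ x.1.1 < x.1.2)).card := by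
  classical
  refine Finset.card_bij
    (fun (x : (ℕ × ℕ) × ℕ × ℕ) _ => ((x.1.2, x.1.1), (x.2.2, x.2.1))) ?_ ?_ ?_
  · rintro ⟨⟨a, c⟩, ⟨b, d⟩⟩ hx
    simp only [Finset.mem_filter, Finset.mem_product] at hx ⊢
    exact ⟨⟨⟨hx.1.1.2, hx.1.1.1⟩, hx.1.2.2, hx.1.2.1⟩, hx.2.1.symm, hx.2.2⟩
  · rintro ⟨⟨a, c⟩, ⟨b, d⟩⟩ _ ⟨⟨a', c'⟩, ⟨b', d'⟩⟩ _ heq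
    simp only [Prod.mk.injEq] at heq
    obtain ⟨⟨e1, e2⟩, e3, e4⟩ := heq
    subst e1; subst e2; subst e3; subst e4; rfl
  · rintro ⟨⟨a, c⟩, ⟨b, d⟩⟩ hx
    simp only [Finset.mem_filter, Finset.mem_product] at hx
    refine ⟨((c, a), (d, b)), ?_, rfl⟩
    simp only [Finset.mem_filter, Finset.mem_product]
    exact ⟨⟨⟨hx.1.1.2, hx.1.1.1⟩, hx.1.2.2, hx.1.2.1⟩, hx.2.1.symm, hx.2.2⟩

lemma comb_main (N m : ℕ) :
    ((((Enm N m ×ˢ Enm N m) ×ˢ (Enm N m ×ˢ Enm N m))).filter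
      (fun x => x.1.1 * x.2.1 = x.1.2 * x.2.2)).card
    = (Enm N m).card ^ 2 +
        2 * ∑ k ∈ Finset.range (m + 1),
          ∑ ab ∈ (Enm N k ×ˢ Enm N k).filter
              (fun ab => Nat.gcd ab.1 ab.2 = 1 ∧ ab.1 < ab.2),
            ((Enm (N / ab.2) (m - k)).card) ^ 2 := by
  classical
  set T := ((Enm N m ×ˢ Enm N m) ×ˢ (Enm N m ×ˢ Enm N m)) with hT
  have hsplit : (T.filter (fun x => x.1.1 * x.2.1 = x.1.2 * x.2.2)).card
      = (T.filter (fun x => x.1.1 * x.2.1 = x.1.2 * x.2.2 ∧ x.1.1 = x.1.2)).card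
      + ((T.filter (fun x => x.1.1 * x.2.1 = x.1.2 * x.2.2 ∧ x.1.1 < x.1.2)).card
      + (T.filter (fun x => x.1.1 * x.2.1 = x.1.2 * x.2.2 ∧ x.1.2 < x.1.1)).card) := by
    rw [Finset.card_filter, Finset.card_filter, Finset.card_filter, Finset.card_filter,
      ← Finset.sum_add_distrib, ← Finset.sum_add_distrib]
    refine Finset.sum_congr rfl fun x _ => ?_
    rcases lt_trichotomy x.1.1 x.1.2 with h | h | h <;>
      by_cases hq : x.1.1 * x.2.1 = x.1.2 * x.2.2
    · simp [hq, h, h.ne, asymm h]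
    · simp [hq, h, h.ne, asymm h]
    · simp [hq, h]
    · simp [hq, h]
    · simp [hq, h, h.ne', asymm h]
    · simp [hq, h, h.ne', asymm h]
  rw [hsplit, card_diag, card_swap, card_lt_part]
  ring


open MeasureTheory ProbabilityTheory

section helpers

variable {Ω : Type} [MeasureSpace Ω]
  (z : ℕ → Ω → ℂ)
  (hone : ∀ ω : Ω, z 1 ω = 1)
  (hmul : ∀ ω : Ω, ∀ m n : ℕ, 0 < m → 0 < n → z (m * n) ω = z m ω * z n ω)

include hone hmul

lemma zpow_lemma (p : ℕ) (hp : 0 < p) : ∀ (k : ℕ) (ω : Ω), z (p ^ k) ω = z p ω ^ k := by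
  intro k
  induction k with
  | zero => intro ω; simpa using hone ω
  | succ k ih =>
    intro ω
    rw [pow_succ, hmul ω _ p (pow_pos hp k) hp, ih ω, pow_succ]

lemma znorm_one (hcirc : ∀ p : ℕ, p.Prime → ∀ ω : Ω, ‖z p ω‖ = 1) :
    ∀ n : ℕ, 0 < n → ∀ ω : Ω, ‖z n ω‖ = 1 := by
  intro n
  induction n using Nat.strong_induction_on with
  | _ n ih =>
    intro hn ω
    by_cases hne : n = 1
    · subst hne; rw [hone ω]; simp
    · have hp := Nat.minFac_prime hne
      have hdvd := Nat.minFac_dvd n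
      have h2le : 2 ≤ n.minFac := hp.two_le
      have hq : n / n.minFac < n := Nat.div_lt_self (by omega) (by omega)
      have hqpos : 0 < n / n.minFac := Nat.div_pos (Nat.le_of_dvd (by omega) hdvd) (by omega)
      have heq : n = n.minFac * (n / n.minFac) := (Nat.mul_div_cancel' hdvd).symm
      conv_lhs => rw [heq]
      rw [hmul ω _ _ (by omega) hqpos, norm_mul, hcirc _ hp ω, ih _ hq hqpos ω, one_mul]

lemma zfact :
    ∀ n : ℕ, 0 < n → ∀ ω : Ω, z n ω = ∏ p ∈ n.primeFactors, z p ω ^ n.factorization p := by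
  intro n
  induction n using Nat.recOnPosPrimePosCoprime with
  | prime_pow p k hp hk =>
    intro _ ω
    have hpp : p.Prime := hp
    rw [Nat.primeFactors_prime_pow hk.ne' hpp, hpp.factorization_pow,
      Finset.prod_singleton, Finsupp.single_eq_same, zpow_lemma z hone hmul p hpp.pos]
  | zero => intro h; exact absurd h (lt_irrefl 0)
  | one => intro _ ω; simpa using hone ω
  | coprime a b ha hb hab iha ihb =>
    intro _ ω
    have ha0 : a ≠ 0 := by omega
    have hb0 : b ≠ 0 := by omega
    rw [hmul ω a b (by omega) (by omega), iha (by omega) ω, ihb (by omega) ω,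
      Nat.primeFactors_mul ha0 hb0,
      Finset.prod_union (Nat.Coprime.disjoint_primeFactors hab)]
    congr 1
    · refine Finset.prod_congr rfl fun p hpmem => ?_
      have : b.factorization p = 0 := by
        rw [← Finsupp.notMem_support_iff, Nat.support_factorization]
        exact Finset.disjoint_left.mp (Nat.Coprime.disjoint_primeFactors hab) hpmem
      rw [Nat.factorization_mul ha0 hb0, Finsupp.add_apply, this, add_zero]
    · refine Finset.prod_congr rfl fun p hpmem => ?_
      have : a.factorization p = 0 := by
        rw [← Finsupp.notMem_support_iff, Nat.support_factorization]
        exact Finset.disjoint_right.mp (Nat.Coprime.disjoint_primeFactors hab) hpmem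
      rw [Nat.factorization_mul ha0 hb0, Finsupp.add_apply, this, zero_add]

lemma zfact_ext (F : Finset ℕ) (n : ℕ) (hn : 0 < n) (hsub : n.primeFactors ⊆ F) (ω : Ω) :
    z n ω = ∏ p ∈ F, z p ω ^ n.factorization p := by
  rw [zfact z hone hmul n hn ω]
  refine Finset.prod_subset hsub fun p _ hp => ?_
  have : n.factorization p = 0 := by
    rw [← Finsupp.notMem_support_iff, Nat.support_factorization]; exact hp
  rw [this, pow_zero]

end helpers


open MeasureTheory ProbabilityTheory



section cmul

variable {Ω : Type} [MeasureSpace Ω]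

/-- complex version of IndepFun.integral_mul -/
lemma indepFun_integral_mul_complex {X Y : Ω → ℂ}
    (h : IndepFun X Y (ℙ : Measure Ω)) (hX : Integrable X ℙ) (hY : Integrable Y ℙ) :
    ∫ ω, X ω * Y ω ∂ℙ = (∫ ω, X ω ∂ℙ) * ∫ ω, Y ω ∂ℙ := by
  have mre : Measurable (Complex.re) := Complex.measurable_re
  have mim : Measurable (Complex.im) := Complex.measurable_im
  have hXr : Integrable (fun ω => (X ω).re) ℙ := hX.re
  have hXi : Integrable (fun ω => (X ω).im) ℙ := hX.im
  have hYr : Integrable (fun ω => (Y ω).re) ℙ := hY.re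
  have hYi : Integrable (fun ω => (Y ω).im) ℙ := hY.im
  have hrr : IndepFun (fun ω => (X ω).re) (fun ω => (Y ω).re) ℙ := h.comp mre mre
  have hri : IndepFun (fun ω => (X ω).re) (fun ω => (Y ω).im) ℙ := h.comp mre mim
  have hir : IndepFun (fun ω => (X ω).im) (fun ω => (Y ω).re) ℙ := h.comp mim mre
  have hii : IndepFun (fun ω => (X ω).im) (fun ω => (Y ω).im) ℙ := h.comp mim mim
  have err : ∫ ω, (X ω).re * (Y ω).re ∂ℙ
      = (∫ ω, (X ω).re ∂ℙ) * ∫ ω, (Y ω).re ∂ℙ := IndepFun.integral_mul_eq_mul_integral hrr hXr.aestronglyMeasurable hYr.aestronglyMeasurable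
  have eri : ∫ ω, (X ω).re * (Y ω).im ∂ℙ
      = (∫ ω, (X ω).re ∂ℙ) * ∫ ω, (Y ω).im ∂ℙ := IndepFun.integral_mul_eq_mul_integral hri hXr.aestronglyMeasurable hYi.aestronglyMeasurable
  have eir : ∫ ω, (X ω).im * (Y ω).re ∂ℙ
      = (∫ ω, (X ω).im ∂ℙ) * ∫ ω, (Y ω).re ∂ℙ := IndepFun.integral_mul_eq_mul_integral hir hXi.aestronglyMeasurable hYr.aestronglyMeasurable
  have eii : ∫ ω, (X ω).im * (Y ω).im ∂ℙ
      = (∫ ω, (X ω).im ∂ℙ) * ∫ ω, (Y ω).im ∂ℙ := IndepFun.integral_mul_eq_mul_integral hii hXi.aestronglyMeasurable hYi.aestronglyMeasurable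
  have h1 : Integrable (fun ω => (X ω).re * (Y ω).re) ℙ :=
    hrr.integrable_mul hXr hYr
  have h2 : Integrable (fun ω => (X ω).re * (Y ω).im) ℙ :=
    hri.integrable_mul hXr hYi
  have h3 : Integrable (fun ω => (X ω).im * (Y ω).re) ℙ :=
    hir.integrable_mul hXi hYr
  have h4 : Integrable (fun ω => (X ω).im * (Y ω).im) ℙ :=
    hii.integrable_mul hXi hYi
  have hXY : Integrable (fun ω => X ω * Y ω) ℙ := by
    have : (fun ω => X ω * Y ω) = fun ω =>
        ((((X ω).re * (Y ω).re - (X ω).im * (Y ω).im) : ℝ) : ℂ)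
        + (((X ω).re * (Y ω).im + (X ω).im * (Y ω).re : ℝ) : ℂ) * Complex.I := by
      funext ω
      rw [Complex.ext_iff]
      simp [Complex.mul_re, Complex.mul_im]
    rw [this]
    exact ((((h1.sub h4).ofReal)).add (((h2.add h3).ofReal).mul_const Complex.I))
  have intre : ∀ (f : Ω → ℂ), Integrable f ℙ → ∫ ω, (f ω).re ∂ℙ = (∫ ω, f ω ∂ℙ).re := by
    intro f hf
    simpa [RCLike.re_to_complex] using (integral_re (𝕜 := ℂ) hf)
  have intim : ∀ (f : Ω → ℂ), Integrable f ℙ → ∫ ω, (f ω).im ∂ℙ = (∫ ω, f ω ∂ℙ).im := by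
    intro f hf
    simpa [RCLike.im_to_complex] using (integral_im (𝕜 := ℂ) hf)
  rw [Complex.ext_iff]
  constructor
  · rw [← intre _ hXY]
    simp only [Complex.mul_re, Complex.mul_im]
    rw [← intre _ hX, ← intre _ hY, ← intim _ hX, ← intim _ hY]
    have : ∀ ω, (X ω * Y ω).re = (X ω).re * (Y ω).re - (X ω).im * (Y ω).im := fun ω => Complex.mul_re _ _
    calc ∫ ω, (X ω * Y ω).re ∂ℙ
        = ∫ ω, ((X ω).re * (Y ω).re - (X ω).im * (Y ω).im) ∂ℙ := by
          exact integral_congr_ae (Filter.Eventually.of_forall fun ω => this ω)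
      _ = _ := by
          rw [integral_sub h1 h4, err, eii]
  · rw [← intim _ hXY]
    simp only [Complex.mul_im]
    rw [← intre _ hX, ← intre _ hY, ← intim _ hX, ← intim _ hY]
    calc ∫ ω, (X ω * Y ω).im ∂ℙ
        = ∫ ω, ((X ω).re * (Y ω).im + (X ω).im * (Y ω).re) ∂ℙ := by
          exact integral_congr_ae (Filter.Eventually.of_forall fun ω => Complex.mul_im _ _)
      _ = _ := by
          rw [integral_add h2 h3, eri, eir]

end cmul


open MeasureTheory ProbabilityTheory



lemma steinhaus_pow_eq_zero (k : ℕ) (hk : 0 < k) :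
    ∫ w, w ^ k ∂steinhausMeasure = 0 := by
  have hmeas : AEMeasurable (fun t : ℝ => Complex.exp (t * Complex.I))
      ((ENNReal.ofReal (2 * Real.pi))⁻¹ • volume.restrict (Set.Ioc 0 (2 * Real.pi))) :=
    (Complex.continuous_exp.comp ((Complex.continuous_ofReal).mul continuous_const)).measurable.aemeasurable
  rw [steinhausMeasure, integral_map hmeas (by fun_prop : AEStronglyMeasurable (fun w : ℂ => w ^ k) _)]
  rw [integral_smul_measure]
  have h2pi : (0:ℝ) ≤ 2 * Real.pi := by positivity
  have key : ∫ t in Set.Ioc (0:ℝ) (2 * Real.pi), Complex.exp (t * Complex.I) ^ k = 0 := by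
    have h1 : ∫ t in Set.Ioc (0:ℝ) (2 * Real.pi), Complex.exp (t * Complex.I) ^ k
        = ∫ t in (0:ℝ)..(2 * Real.pi), Complex.exp (t * Complex.I) ^ k :=
      (intervalIntegral.integral_of_le h2pi).symm
    have h2 : ∀ t : ℝ, Complex.exp (t * Complex.I) ^ k
        = Complex.exp (((k : ℂ) * Complex.I) * t) := by
      intro t
      rw [← Complex.exp_nat_mul]
      ring_nf
    rw [h1]
    simp_rw [h2]
    have hc : ((k : ℂ) * Complex.I) ≠ 0 := by
      simp [Complex.I_ne_zero, Nat.cast_eq_zero]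
      omega
    rw [integral_exp_mul_complex hc]
    have he : Complex.exp ((k : ℂ) * Complex.I * (2 * Real.pi)) = 1 := by
      have : ((k : ℂ) * Complex.I * (2 * Real.pi)) = ((k : ℤ) : ℂ) * (2 * Real.pi * Complex.I) := by
        push_cast; ring
      rw [this, Complex.exp_int_mul_two_pi_mul_I]
    simp [he]
  rw [key, smul_zero]

section prime

variable {Ω : Type} [MeasureSpace Ω] (hprob : IsProbabilityMeasure (ℙ : Measure Ω))
  (z : ℕ → Ω → ℂ)
  (hmeas : ∀ n : ℕ, Measurable (z n))
  (hcirc : ∀ p : ℕ, p.Prime → ∀ ω : Ω, ‖z p ω‖ = 1)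
  (hunif : ∀ p : ℕ, p.Prime → Measure.map (z p) ℙ = steinhausMeasure)

include hmeas hunif in
lemma zp_pow_zero (p : ℕ) (hp : p.Prime) (k : ℕ) (hk : 0 < k) :
    ∫ ω, (z p ω) ^ k ∂ℙ = 0 := by
  have : ∫ ω, (z p ω) ^ k ∂ℙ = ∫ w, w ^ k ∂(Measure.map (z p) ℙ) := by
    rw [integral_map (hmeas p).aemeasurable
      (by fun_prop : AEStronglyMeasurable (fun w : ℂ => w ^ k) _)]
  rw [this, hunif p hp, steinhaus_pow_eq_zero k hk]

include hmeas hunif in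
lemma zp_conj_pow_zero (p : ℕ) (hp : p.Prime) (k : ℕ) (hk : 0 < k) :
    ∫ ω, (starRingEnd ℂ) (z p ω) ^ k ∂ℙ = 0 := by
  have h : ∫ ω, (starRingEnd ℂ) (z p ω) ^ k ∂ℙ
      = ∫ ω, (starRingEnd ℂ) ((z p ω) ^ k) ∂ℙ := by
    simp [map_pow]
  rw [h, integral_conj, zp_pow_zero z hmeas hunif p hp k hk, map_zero]

include hprob hmeas hcirc hunif in
lemma zp_moment (p : ℕ) (hp : p.Prime) (a b : ℕ) :
    ∫ ω, (z p ω) ^ a * (starRingEnd ℂ) (z p ω) ^ b ∂ℙ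
      = if a = b then 1 else 0 := by
  have hzc : ∀ ω, z p ω * (starRingEnd ℂ) (z p ω) = 1 := by
    intro ω
    rw [Complex.mul_conj, Complex.normSq_eq_norm_sq, hcirc p hp ω]
    norm_num
  rcases lt_trichotomy a b with h | h | h
  · have hpt : ∀ ω, (z p ω) ^ a * (starRingEnd ℂ) (z p ω) ^ b
        = (starRingEnd ℂ) (z p ω) ^ (b - a) := by
      intro ω
      have hb : b = a + (b - a) := by omega
      calc (z p ω) ^ a * (starRingEnd ℂ) (z p ω) ^ b
          = (z p ω) ^ a * ((starRingEnd ℂ) (z p ω) ^ a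
              * (starRingEnd ℂ) (z p ω) ^ (b - a)) := by
            rw [← pow_add, ← hb]
        _ = (z p ω * (starRingEnd ℂ) (z p ω)) ^ a
              * (starRingEnd ℂ) (z p ω) ^ (b - a) := by ring
        _ = (starRingEnd ℂ) (z p ω) ^ (b - a) := by rw [hzc ω, one_pow, one_mul]
    simp_rw [hpt]
    rw [zp_conj_pow_zero z hmeas hunif p hp (b - a) (by omega)]
    simp [Nat.ne_of_lt h]
  · subst h
    have hpt : ∀ ω, (z p ω) ^ a * (starRingEnd ℂ) (z p ω) ^ a = 1 := by
      intro ω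
      rw [← mul_pow, hzc ω, one_pow]
    simp_rw [hpt]
    simp [measure_univ]
  · have hpt : ∀ ω, (z p ω) ^ a * (starRingEnd ℂ) (z p ω) ^ b
        = (z p ω) ^ (a - b) := by
      intro ω
      have ha : a = b + (a - b) := by omega
      calc (z p ω) ^ a * (starRingEnd ℂ) (z p ω) ^ b
          = ((z p ω) ^ b * (z p ω) ^ (a - b)) * (starRingEnd ℂ) (z p ω) ^ b := by
            rw [← pow_add, ← ha]
        _ = (z p ω * (starRingEnd ℂ) (z p ω)) ^ b * (z p ω) ^ (a - b) := by ring
        _ = (z p ω) ^ (a - b) := by rw [hzc ω, one_pow, one_mul]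
    simp_rw [hpt]
    rw [zp_pow_zero z hmeas hunif p hp (a - b) (by omega)]
    simp [Nat.ne_of_gt h]

end prime

section indep

variable {Ω : Type} [MeasureSpace Ω] (hprob : IsProbabilityMeasure (ℙ : Measure Ω))
  (z : ℕ → Ω → ℂ)
  (hmeas : ∀ n : ℕ, Measurable (z n))
  (hindep : iIndepFun
      (fun p : Nat.Primes => z (p : ℕ)) ℙ)

include hprob in
lemma integrable_of_bounded_one {g : Ω → ℂ} (hg : Measurable g) (hb : ∀ ω, ‖g ω‖ ≤ 1) :
    Integrable g ℙ := by
  refine ⟨hg.aestronglyMeasurable, ?_⟩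
  exact HasFiniteIntegral.of_bounded (C := 1) (Filter.Eventually.of_forall hb)

include hprob hmeas hindep in
lemma integral_prod_primes (F : Finset ℕ) (hF : ∀ p ∈ F, p.Prime)
    (f : ℕ → ℂ → ℂ) (hfm : ∀ p, Measurable (f p))
    (hbd : ∀ p ∈ F, ∀ ω, ‖f p (z p ω)‖ ≤ 1) :
    ∫ ω, ∏ p ∈ F, f p (z p ω) ∂ℙ = ∏ p ∈ F, ∫ ω, f p (z p ω) ∂ℙ := by
  classical
  induction F using Finset.induction_on with
  | empty => simp [measure_univ]
  | insert a s ha ih =>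
    have hF' : ∀ p ∈ s, p.Prime := fun p hp => hF p (Finset.mem_insert_of_mem hp)
    have hbd' : ∀ p ∈ s, ∀ ω, ‖f p (z p ω)‖ ≤ 1 :=
      fun p hp => hbd p (Finset.mem_insert_of_mem hp)
    have hbda : ∀ ω, ‖f a (z a ω)‖ ≤ 1 := hbd a (Finset.mem_insert_self a s)
    have hap : a.Prime := hF a (Finset.mem_insert_self a s)
    simp_rw [Finset.prod_insert ha]
    rw [← ih hF' hbd']
    -- independence of f a (z a ·) from the product over s
    have hindep' : iIndepFun
        (fun q : Nat.Primes => f (q : ℕ) ∘ z (q : ℕ)) ℙ :=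
      hindep.comp (fun q : Nat.Primes => f (q : ℕ)) (fun q => hfm (q : ℕ))
    have hmeas' : ∀ q : Nat.Primes, Measurable (f (q : ℕ) ∘ z (q : ℕ)) :=
      fun q => (hfm (q : ℕ)).comp (hmeas (q : ℕ))
    have hnotmem : (⟨a, hap⟩ : Nat.Primes) ∉ s.subtype Nat.Prime := by
      simp [Finset.mem_subtype, ha]
    have hIF := hindep'.indepFun_finsetProd_of_notMem hmeas' hnotmem
    have hprod_eq : (∏ j ∈ s.subtype Nat.Prime, (f (j : ℕ) ∘ z (j : ℕ)))
        = fun ω => ∏ p ∈ s, f p (z p ω) := by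
      funext ω
      rw [Finset.prod_apply]
      simp only [Function.comp_apply]
      rw [Finset.prod_subtype_eq_prod_filter (fun p => f p (z p ω)) (p := Nat.Prime),
        Finset.filter_true_of_mem hF']
    have hIF2 : IndepFun (fun ω => ∏ p ∈ s, f p (z p ω)) (fun ω => f a (z a ω)) ℙ :=
      IndepFun.congr hIF (Filter.Eventually.of_forall fun ω => (congrFun hprod_eq ω))
        (Filter.Eventually.of_forall fun ω => rfl)
    have hint1 : Integrable (fun ω => f a (z a ω)) ℙ :=
      integrable_of_bounded_one hprob ((hfm a).comp (hmeas a)) hbda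
    have hint2 : Integrable (fun ω => ∏ p ∈ s, f p (z p ω)) ℙ := by
      refine integrable_of_bounded_one hprob ?_ ?_
      · exact Finset.measurable_prod s (fun p _ => (hfm p).comp (hmeas p))
      · intro ω
        calc ‖∏ p ∈ s, f p (z p ω)‖ = ∏ p ∈ s, ‖f p (z p ω)‖ := norm_prod _ _
          _ ≤ 1 := Finset.prod_le_one (fun p _ => norm_nonneg _) (fun p hp => hbd' p hp ω)
    exact indepFun_integral_mul_complex hIF2.symm hint1 hint2

end indep


section mainlemmas

variable {Ω : Type} [MeasureSpace Ω] (hprob : IsProbabilityMeasure (ℙ : Measure Ω))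
  (z : ℕ → Ω → ℂ)
  (hmeas : ∀ n : ℕ, Measurable (z n))
  (hone : ∀ ω : Ω, z 1 ω = 1)
  (hmul : ∀ ω : Ω, ∀ m n : ℕ, 0 < m → 0 < n → z (m * n) ω = z m ω * z n ω)
  (hcirc : ∀ p : ℕ, p.Prime → ∀ ω : Ω, ‖z p ω‖ = 1)
  (hindep : iIndepFun
      (fun p : Nat.Primes => z (p : ℕ)) ℙ)
  (hunif : ∀ p : ℕ, p.Prime → Measure.map (z p) ℙ = steinhausMeasure)

include hprob hmeas hone hmul hcirc hindep hunif in
lemma zmoment (m n : ℕ) (hm : 0 < m) (hn : 0 < n) :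
    ∫ ω, z m ω * (starRingEnd ℂ) (z n ω) ∂ℙ = if m = n then 1 else 0 := by
  classical
  set F := m.primeFactors ∪ n.primeFactors with hF
  have hFp : ∀ p ∈ F, p.Prime := by
    intro p hp
    rcases Finset.mem_union.mp hp with h | h
    · exact Nat.prime_of_mem_primeFactors h
    · exact Nat.prime_of_mem_primeFactors h
  set f : ℕ → ℂ → ℂ :=
    fun p w => w ^ m.factorization p * (starRingEnd ℂ) w ^ n.factorization p with hfdef
  have hfm : ∀ p, Measurable (f p) := by
    intro p
    exact ((measurable_id.pow_const _).mul ((Complex.continuous_conj.measurable).pow_const _))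
  have hbd : ∀ p ∈ F, ∀ ω, ‖f p (z p ω)‖ ≤ 1 := by
    intro p hp ω
    have h1 : ‖z p ω‖ = 1 := hcirc p (hFp p hp) ω
    rw [hfdef]
    have h2 : ‖(starRingEnd ℂ) (z p ω)‖ = 1 := by
      rw [RCLike.norm_conj, h1]
    simp only [norm_mul, norm_pow, h1, h2, one_pow, one_mul]
    exact le_refl 1
  have hpt : ∀ ω, z m ω * (starRingEnd ℂ) (z n ω) = ∏ p ∈ F, f p (z p ω) := by
    intro ω
    have h1 : z m ω = ∏ p ∈ F, z p ω ^ m.factorization p :=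
      zfact_ext z hone hmul F m hm Finset.subset_union_left ω
    have h2 : (starRingEnd ℂ) (z n ω)
        = ∏ p ∈ F, (starRingEnd ℂ) (z p ω) ^ n.factorization p := by
      rw [zfact_ext z hone hmul F n hn Finset.subset_union_right ω, map_prod]
      simp [map_pow]
    rw [h1, h2, ← Finset.prod_mul_distrib]
  calc ∫ ω, z m ω * (starRingEnd ℂ) (z n ω) ∂ℙ
      = ∫ ω, ∏ p ∈ F, f p (z p ω) ∂ℙ := by
        exact integral_congr_ae (Filter.Eventually.of_forall hpt)
    _ = ∏ p ∈ F, ∫ ω, f p (z p ω) ∂ℙ :=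
        integral_prod_primes hprob z hmeas hindep F hFp f hfm hbd
    _ = ∏ p ∈ F, (if m.factorization p = n.factorization p then (1:ℂ) else 0) := by
        refine Finset.prod_congr rfl fun p hp => ?_
        exact zp_moment hprob z hmeas hcirc hunif p (hFp p hp) _ _
    _ = if m = n then 1 else 0 := by
        by_cases hmn : m = n
        · subst hmn
          simp
        · rw [if_neg hmn]
          have hfne : m.factorization ≠ n.factorization := by
            intro h
            exact hmn (Nat.factorization_inj (by simp [hm.ne'] : m ∈ {x : ℕ | x ≠ 0})
              (by simp [hn.ne'] : n ∈ {x : ℕ | x ≠ 0}) h)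
          obtain ⟨p, hp⟩ := Finsupp.ne_iff.mp hfne
          have hpF : p ∈ F := by
            rcases Nat.eq_zero_or_pos (m.factorization p) with h0 | h0
            · have : n.factorization p ≠ 0 := by rw [h0] at hp; exact fun h => hp h.symm
              refine Finset.mem_union_right _ ?_
              rw [← Nat.support_factorization]
              exact Finsupp.mem_support_iff.mpr this
            · refine Finset.mem_union_left _ ?_
              rw [← Nat.support_factorization]
              exact Finsupp.mem_support_iff.mpr (by omega)
          exact Finset.prod_eq_zero hpF (if_neg hp)

include hprob hmeas hone hmul hcirc hindep hunif in
lemma zfour (a b c d : ℕ) (ha : 0 < a) (hb : 0 < b) (hc : 0 < c) (hd : 0 < d) :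
    ∫ ω, (z a ω * (starRingEnd ℂ) (z c ω)) * (z b ω * (starRingEnd ℂ) (z d ω)) ∂ℙ
      = if a * b = c * d then 1 else 0 := by
  have hpt : ∀ ω, (z a ω * (starRingEnd ℂ) (z c ω)) * (z b ω * (starRingEnd ℂ) (z d ω))
      = z (a * b) ω * (starRingEnd ℂ) (z (c * d) ω) := by
    intro ω
    rw [hmul ω a b ha hb, hmul ω c d hc hd, map_mul]
    ring
  rw [integral_congr_ae (Filter.Eventually.of_forall hpt)]
  exact zmoment hprob z hmeas hone hmul hcirc hindep hunif (a * b) (c * d)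
    (by positivity) (by positivity)

end mainlemmas

theorem fourth_moment_homogeneous
    {Ω : Type} [MeasureSpace Ω] (hprob : IsProbabilityMeasure (ℙ : Measure Ω))
    (z : ℕ → Ω → ℂ)
    (hmeas : ∀ n : ℕ, Measurable (z n))
    (hone : ∀ ω : Ω, z 1 ω = 1)
    (hmul : ∀ ω : Ω, ∀ m n : ℕ, 0 < m → 0 < n → z (m * n) ω = z m ω * z n ω)
    (hcirc : ∀ p : ℕ, p.Prime → ∀ ω : Ω, ‖z p ω‖ = 1)
    (hindep : iIndepFun
      (fun p : Nat.Primes => z (p : ℕ)) ℙ)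
    (hunif : ∀ p : ℕ, p.Prime → Measure.map (z p) ℙ = steinhausMeasure) :
    ∀ N : ℕ, 1 ≤ N → ∀ m : ℕ,
      (∫ ω, ‖∑ n ∈ Enm N m, z n ω‖ ^ 4 ∂ℙ) =
        ((Enm N m).card : ℝ) ^ 2 +
          2 * ∑ k ∈ Finset.range (m + 1),
            ∑ ab ∈ (Enm N k ×ˢ Enm N k).filter
                (fun ab => Nat.gcd ab.1 ab.2 = 1 ∧ ab.1 < ab.2),
              ((Enm (N / ab.2) (m - k)).card : ℝ) ^ 2 := by
  classical
  intro N hN m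
  set E := Enm N m with hE
  have hpos : ∀ n ∈ E, 0 < n := fun n hn => (mem_Enm.mp hn).1.1
  have hz1 : ∀ n ∈ E, ∀ ω, ‖z n ω‖ = 1 :=
    fun n hn ω => znorm_one z hone hmul hcirc n (hpos n hn) ω
  set T := (E ×ˢ E) ×ˢ (E ×ˢ E) with hT
  set g : (ℕ × ℕ) × ℕ × ℕ → Ω → ℂ := fun x ω =>
    (z x.1.1 ω * (starRingEnd ℂ) (z x.1.2 ω))
      * (z x.2.1 ω * (starRingEnd ℂ) (z x.2.2 ω)) with hg
  -- pointwise expansion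
  have hexp : ∀ ω, ((∑ n ∈ E, z n ω) * (starRingEnd ℂ) (∑ n ∈ E, z n ω))
      * ((∑ n ∈ E, z n ω) * (starRingEnd ℂ) (∑ n ∈ E, z n ω))
      = ∑ x ∈ T, g x ω := by
    intro ω
    have h1 : (∑ n ∈ E, z n ω) * (starRingEnd ℂ) (∑ n ∈ E, z n ω)
        = ∑ p ∈ E ×ˢ E, z p.1 ω * (starRingEnd ℂ) (z p.2 ω) := by
      rw [map_sum, Finset.sum_mul_sum]
      rw [Finset.sum_product]
    rw [h1, Finset.sum_mul_sum, hT]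
    simp only [Finset.sum_product, hg]
  -- norm fourth power pointwise
  have hnorm4 : ∀ ω, (‖∑ n ∈ E, z n ω‖ : ℝ) ^ 4
      = ((∑ x ∈ T, g x ω).re) := by
    intro ω
    rw [← hexp ω, Complex.mul_conj]
    have : ((Complex.normSq (∑ n ∈ E, z n ω) : ℂ) * (Complex.normSq (∑ n ∈ E, z n ω) : ℂ)).re
        = Complex.normSq (∑ n ∈ E, z n ω) * Complex.normSq (∑ n ∈ E, z n ω) := by
      rw [← Complex.ofReal_mul, Complex.ofReal_re]
    rw [this, Complex.normSq_eq_norm_sq]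
    ring
  -- integrability of each term
  have hint : ∀ x ∈ T, Integrable (g x) ℙ := by
    intro x hx
    simp only [hT, Finset.mem_product] at hx
    obtain ⟨⟨ha, hc⟩, hb, hd⟩ := hx
    refine integrable_of_bounded_one hprob ?_ ?_
    · exact (((hmeas _).mul ((Complex.continuous_conj.measurable).comp (hmeas _))).mul
        ((hmeas _).mul ((Complex.continuous_conj.measurable).comp (hmeas _))))
    · intro ω
      simp only [hg, norm_mul, RCLike.norm_conj,
        hz1 _ ha ω, hz1 _ hb ω, hz1 _ hc ω, hz1 _ hd ω]
      norm_num
  -- compute the integral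
  have hsum : ∫ ω, ‖∑ n ∈ E, z n ω‖ ^ 4 ∂ℙ
      = ∑ x ∈ T, (if x.1.1 * x.2.1 = x.1.2 * x.2.2 then (1:ℝ) else 0) := by
    have hbig : Integrable (fun ω => ∑ x ∈ T, g x ω) ℙ :=
      integrable_finset_sum T hint
    have intre : ∫ ω, (∑ x ∈ T, g x ω).re ∂ℙ = (∫ ω, ∑ x ∈ T, g x ω ∂ℙ).re := by
      simpa [RCLike.re_to_complex] using (integral_re (𝕜 := ℂ) hbig)
    calc ∫ ω, ‖∑ n ∈ E, z n ω‖ ^ 4 ∂ℙ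
        = ∫ ω, (∑ x ∈ T, g x ω).re ∂ℙ :=
          integral_congr_ae (Filter.Eventually.of_forall hnorm4)
      _ = (∫ ω, ∑ x ∈ T, g x ω ∂ℙ).re := intre
      _ = (∑ x ∈ T, ∫ ω, g x ω ∂ℙ).re := by rw [integral_finset_sum T hint]
      _ = ∑ x ∈ T, (∫ ω, g x ω ∂ℙ).re := by rw [Complex.re_sum]
      _ = ∑ x ∈ T, (if x.1.1 * x.2.1 = x.1.2 * x.2.2 then (1:ℝ) else 0) := by
          refine Finset.sum_congr rfl fun x hx => ?_
          simp only [hT, Finset.mem_product] at hx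
          obtain ⟨⟨ha, hc⟩, hb, hd⟩ := hx
          rw [hg]
          rw [zfour hprob z hmeas hone hmul hcirc hindep hunif x.1.1 x.2.1 x.1.2 x.2.2
            (hpos _ ha) (hpos _ hb) (hpos _ hc) (hpos _ hd)]
          split <;> simp
  rw [hsum, Finset.sum_boole]
  have := comb_main N m
  rw [hT, hE]
  rw [show (Finset.filter (fun x => x.1.1 * x.2.1 = x.1.2 * x.2.2)
      ((Enm N m ×ˢ Enm N m) ×ˢ Enm N m ×ˢ Enm N m)).card
    = (Enm N m).card ^ 2 + 2 * ∑ k ∈ Finset.range (m + 1),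
        ∑ ab ∈ (Enm N k ×ˢ Enm N k).filter
            (fun ab => Nat.gcd ab.1 ab.2 = 1 ∧ ab.1 < ab.2),
          ((Enm (N / ab.2) (m - k)).card) ^ 2 from this]
  push_cast
  ring
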